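/- Let Z₁ ∈ ℝ^{q×n}, Z₂ ∈ ℝ^{m×n}, X₁ ∈ ℝ^{q×T}, X₂ ∈ ℝ^{m×T} be real matrices and λ ≠ 0. Assume Z₂Z₂ᵀ is invertible and M(λ) = I_m − F₀/λ is invertible, where F₀ = (Z₂Z₂ᵀ/n)⁻¹(X₂X₂ᵀ/T) (equivalently, (λ/n)Z₂Z₂ᵀ − (1/T)X₂X₂ᵀ is invertible). Then the Schur-complement matrix (λ/n)Z₁Z₁ᵀ − (1/T)X₁X₁ᵀ − ((λ/n)Z₁Z₂ᵀ − (1/T)X₁X₂ᵀ)·((λ/n)Z₂Z₂ᵀ − (1/T)X₂X₂ᵀ)⁻¹·((λ/n)Z₂Z₁ᵀ − (1/T)X₂X₁ᵀ) equals λ·Z₁(I_n − A(λ))Z₁ᵀ/n − X₁(I_T + B(λ))X₁ᵀ/T + λ·Z₁C(λ)X₁ᵀ/n + λ·X₁D(λ)Z₁ᵀ/T, where A(λ) = Z₂ᵀM(λ)⁻¹(Z₂Z₂ᵀ/n)⁻¹Z₂/n, B(λ) = X₂ᵀM(λ)⁻¹(Z₂Z₂ᵀ/n)⁻¹X₂/(λT),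 C(λ) = Z₂ᵀM(λ)⁻¹(Z₂Z₂ᵀ/n)⁻¹X₂/(λT) and D(λ) = X₂ᵀM(λ)⁻¹(Z₂Z₂ᵀ/n)⁻¹Z₂/(λn). -/
import Mathlib


open MeasureTheory ProbabilityTheory Filter Matrix
open scoped Topology

noncomputable section

/-- `O_p` boundedness in probability at rate `a` (which may itself be random):
for every `ε > 0` there is `C` with `P(|ξ_n| > C a_n) < ε` for all large `n`. -/
def IsBigOp {Ω : Type} [MeasurableSpace Ω] (μ : Measure Ω)
    (ξ : ℕ → Ω → ℝ) (a : ℕ → Ω → ℝ) : Prop :=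
  ∀ ε : ℝ, 0 < ε → ∃ C : ℝ, 0 < C ∧
    ∀ᶠ n in atTop, (μ {ω | C * a n ω < |ξ n ω|}).toReal < ε

/-- top `q × n` block of a `p × n` matrix -/
def block1 {p q n : ℕ} (h : q ≤ p) (Z : Matrix (Fin p) (Fin n) ℝ) :
    Matrix (Fin q) (Fin n) ℝ :=
  Matrix.of fun i j => Z (Fin.castLE h i) j

/-- bottom `(p-q) × n` block of a `p × n` matrix -/
def block2 {p q n : ℕ} (h : q ≤ p) (Z : Matrix (Fin p) (Fin n) ℝ) :
    Matrix (Fin (p - q)) (Fin n) ℝ :=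
  Matrix.of fun i j => Z ⟨q + i.1, by have := i.isLt; omega⟩ j

/-- the sample covariance `(1/n) Z Zᵀ` -/
def scov {m n : ℕ} (Z : Matrix (Fin m) (Fin n) ℝ) : Matrix (Fin m) (Fin m) ℝ :=
  (n : ℝ)⁻¹ • (Z * Zᵀ)

/-- `F₀ = (Z₂Z₂ᵀ/n)⁻¹ (X₂X₂ᵀ/T)` -/
def F0mat {m n T : ℕ} (Z2 : Matrix (Fin m) (Fin n) ℝ) (X2 : Matrix (Fin m) (Fin T) ℝ) :
    Matrix (Fin m) (Fin m) ℝ :=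
  (scov Z2)⁻¹ * scov X2

/-- `M(λ) = I - F₀/λ` -/
def Mmat {m n T : ℕ} (Z2 : Matrix (Fin m) (Fin n) ℝ) (X2 : Matrix (Fin m) (Fin T) ℝ)
    (l : ℝ) : Matrix (Fin m) (Fin m) ℝ :=
  1 - l⁻¹ • F0mat Z2 X2

/-- `A(λ) = Z₂ᵀ M(λ)⁻¹ (Z₂Z₂ᵀ/n)⁻¹ Z₂ / n` -/
def Amat {m n T : ℕ} (Z2 : Matrix (Fin m) (Fin n) ℝ) (X2 : Matrix (Fin m) (Fin T) ℝ)
    (l : ℝ) : Matrix (Fin n) (Fin n) ℝ :=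
  (n : ℝ)⁻¹ • (Z2ᵀ * (Mmat Z2 X2 l)⁻¹ * (scov Z2)⁻¹ * Z2)

/-- `B(λ) = X₂ᵀ M(λ)⁻¹ (Z₂Z₂ᵀ/n)⁻¹ X₂ / (λT)` -/
def Bmat {m n T : ℕ} (Z2 : Matrix (Fin m) (Fin n) ℝ) (X2 : Matrix (Fin m) (Fin T) ℝ)
    (l : ℝ) : Matrix (Fin T) (Fin T) ℝ :=
  (l * (T : ℝ))⁻¹ • (X2ᵀ * (Mmat Z2 X2 l)⁻¹ * (scov Z2)⁻¹ * X2)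

/-- `C(λ) = Z₂ᵀ M(λ)⁻¹ (Z₂Z₂ᵀ/n)⁻¹ X₂ / (λT)` -/
def Cmat {m n T : ℕ} (Z2 : Matrix (Fin m) (Fin n) ℝ) (X2 : Matrix (Fin m) (Fin T) ℝ)
    (l : ℝ) : Matrix (Fin n) (Fin T) ℝ :=
  (l * (T : ℝ))⁻¹ • (Z2ᵀ * (Mmat Z2 X2 l)⁻¹ * (scov Z2)⁻¹ * X2)

/-- `D(λ) = X₂ᵀ M(λ)⁻¹ (Z₂Z₂ᵀ/n)⁻¹ Z₂ / (λn)` -/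
def Dmat {m n T : ℕ} (Z2 : Matrix (Fin m) (Fin n) ℝ) (X2 : Matrix (Fin m) (Fin T) ℝ)
    (l : ℝ) : Matrix (Fin T) (Fin n) ℝ :=
  (l * (n : ℝ))⁻¹ • (X2ᵀ * (Mmat Z2 X2 l)⁻¹ * (scov Z2)⁻¹ * Z2)

/-- `m̃_θ(1) = (1/m) tr M(θ)⁻¹` -/
def mtilde {m n T : ℕ} (Z2 : Matrix (Fin m) (Fin n) ℝ) (X2 : Matrix (Fin m) (Fin T) ℝ)
    (l : ℝ) : ℝ :=
  (m : ℝ)⁻¹ * ((Mmat Z2 X2 l)⁻¹).trace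

/-- the block-diagonal matrix `diag(Uᵀ (diag d) U, I_{p-q})` -/
def spikeMat {p q : ℕ} (h : q ≤ p) (U : Matrix (Fin q) (Fin q) ℝ) (d : Fin q → ℝ) :
    Matrix (Fin p) (Fin p) ℝ :=
  Matrix.of fun i j =>
    if hi : i.1 < q then
      if hj : j.1 < q then (Uᵀ * Matrix.diagonal d * U) ⟨i.1, hi⟩ ⟨j.1, hj⟩ else 0
    else if i.1 = j.1 then 1 else 0

/-- entrywise expectation of a random matrix -/
def matExp {Ω : Type} [MeasurableSpace Ω] (μ : Measure Ω) {a b : Type}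
    (M : Ω → Matrix a b ℝ) : Matrix a b ℝ :=
  Matrix.of fun i j => ∫ ω, M ω i j ∂μ

/-- Schur-complement identity: for real matrices `Z₁, Z₂, X₁, X₂`
and `λ ≠ 0`, if `Z₂Z₂ᵀ` and `M(λ)` are invertible, then the Schur complement of the
block `(λ/n)Z₂Z₂ᵀ - (1/T)X₂X₂ᵀ` equals
`λ Z₁(I - A(λ))Z₁ᵀ/n - X₁(I + B(λ))X₁ᵀ/T + λ Z₁C(λ)X₁ᵀ/n + λ X₁D(λ)Z₁ᵀ/T`. -/
theorem schur_complement_identity {qd m n T : ℕ} (hn : 0 < n) (hT : 0 < T)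
    (Z1 : Matrix (Fin qd) (Fin n) ℝ) (Z2 : Matrix (Fin m) (Fin n) ℝ)
    (X1 : Matrix (Fin qd) (Fin T) ℝ) (X2 : Matrix (Fin m) (Fin T) ℝ)
    (l : ℝ) (hl : l ≠ 0)
    (hZ2 : IsUnit (Z2 * Z2ᵀ).det)
    (hM : IsUnit (Mmat Z2 X2 l).det) :
    (l / (n : ℝ)) • (Z1 * Z1ᵀ) - (T : ℝ)⁻¹ • (X1 * X1ᵀ)
        - ((l / (n : ℝ)) • (Z1 * Z2ᵀ) - (T : ℝ)⁻¹ • (X1 * X2ᵀ))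
          * ((l / (n : ℝ)) • (Z2 * Z2ᵀ) - (T : ℝ)⁻¹ • (X2 * X2ᵀ))⁻¹
          * ((l / (n : ℝ)) • (Z2 * Z1ᵀ) - (T : ℝ)⁻¹ • (X2 * X1ᵀ))
      = (l / (n : ℝ)) • (Z1 * ((1 : Matrix (Fin n) (Fin n) ℝ) - Amat Z2 X2 l) * Z1ᵀ)
        - (T : ℝ)⁻¹ • (X1 * ((1 : Matrix (Fin T) (Fin T) ℝ) + Bmat Z2 X2 l) * X1ᵀ)
        + (l / (n : ℝ)) • (Z1 * Cmat Z2 X2 l * X1ᵀ)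
        + (l / (T : ℝ)) • (X1 * Dmat Z2 X2 l * Z1ᵀ) := by
  have hn0 : (n : ℝ) ≠ 0 := Nat.cast_ne_zero.mpr hn.ne'
  have hT0 : (T : ℝ) ≠ 0 := Nat.cast_ne_zero.mpr hT.ne'
  have hS2 : IsUnit (scov Z2).det := by
    rw [scov, Matrix.det_smul, Fintype.card_fin]
    exact (IsUnit.pow m (isUnit_iff_ne_zero.mpr (inv_ne_zero hn0))).mul hZ2
  have hkey : ((l / (n : ℝ)) • (Z2 * Z2ᵀ) - (T : ℝ)⁻¹ • (X2 * X2ᵀ))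
      = l • (scov Z2 * Mmat Z2 X2 l) := by
    rw [Mmat, F0mat, Matrix.mul_sub, Matrix.mul_one, Matrix.mul_smul,
      ← Matrix.mul_assoc, Matrix.mul_nonsing_inv _ hS2, Matrix.one_mul,
      smul_sub, smul_smul, mul_inv_cancel₀ hl, one_smul, scov, scov,
      smul_smul, div_eq_mul_inv]
  have hinv : ((l / (n : ℝ)) • (Z2 * Z2ᵀ) - (T : ℝ)⁻¹ • (X2 * X2ᵀ))⁻¹
      = l⁻¹ • ((Mmat Z2 X2 l)⁻¹ * (scov Z2)⁻¹) := by
    rw [hkey]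
    apply Matrix.inv_eq_right_inv
    rw [Matrix.smul_mul, Matrix.mul_smul, smul_smul, mul_inv_cancel₀ hl, one_smul,
      Matrix.mul_assoc, ← Matrix.mul_assoc (Mmat Z2 X2 l),
      Matrix.mul_nonsing_inv _ hM, Matrix.one_mul, Matrix.mul_nonsing_inv _ hS2]
  rw [hinv]
  simp only [Amat, Bmat, Cmat, Dmat, Matrix.mul_add, Matrix.add_mul,
    Matrix.mul_sub, Matrix.sub_mul, Matrix.mul_smul, Matrix.smul_mul,
    Matrix.mul_one, Matrix.one_mul, Matrix.mul_assoc, smul_smul]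
  match_scalars
  all_goals
    simp only [mul_one, neg_neg, mul_neg, neg_mul, mul_inv, div_mul_eq_mul_div,
      mul_div_assoc', mul_inv_cancel₀ hl, inv_mul_cancel_right₀ hl,
      mul_inv_cancel_right₀ hl, ← mul_assoc]
  all_goals try ring
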